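/- (Characterization of the hidden assumption.) Let f ∈ Γ(X). Then the following are equivalent: (i) A ∩ dom f = ∅; (ii) w*-cl(epi f* + K) = w*-cl(dom f* + cone Ω + barr C) × ℝ. -/

import Mathlib

open Pointwise

noncomputable section

variable {X : Type*} [AddCommGroup X] [Module ℝ X] [TopologicalSpace X]

/-- Fenchel conjugate, as a function on the weak-* dual. -/
def conjFn (h : X → EReal) : WeakDual ℝ X → EReal :=
  fun p => ⨆ x : X, (p x : EReal) - h x

/-- Epigraph of an extended-real-valued function. -/
def epiFn {V : Type*} (h : V → EReal) : Set (V × ℝ) :=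
  {q | h q.1 ≤ (q.2 : EReal)}

/-- Graph of an extended-real-valued function (where it is finite). -/
def gphFn {V : Type*} (h : V → EReal) : Set (V × ℝ) :=
  {q | h q.1 = (q.2 : EReal)}

/-- Effective domain. -/
def domFn {V : Type*} (h : V → EReal) : Set V :=
  {x | h x < ⊤}

open Classical in
/-- Indicator function of a set. -/
def indicatorE {V : Type*} (D : Set V) : V → EReal :=
  fun x => if x ∈ D then (0 : EReal) else ⊤

/-- Convex cone generated by `D ∪ {0}`. -/
def coneGen {V : Type*} [AddCommGroup V] [Module ℝ V] (D : Set V) : Set V :=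
  {0} ∪ {y | ∃ t : ℝ, 0 ≤ t ∧ ∃ x ∈ convexHull ℝ D, y = t • x}

/-- `h ∈ Γ(X)`: proper, convex and lower semicontinuous. -/
def InGamma (h : X → EReal) : Prop :=
  (∀ x, h x ≠ ⊥) ∧ (∃ x, h x ≠ ⊤) ∧
    Convex ℝ {q : X × ℝ | h q.1 ≤ (q.2 : EReal)} ∧ LowerSemicontinuous h

/-- Solution set `A` of the system `σ = {f i x ≤ 0, i ∈ I; x ∈ C}`. -/
def solSet {I : Type*} (C : Set X) (f : I → X → EReal) : Set X :=
  {x | x ∈ C ∧ ∀ i, f i x ≤ (0 : EReal)}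

/-- Characteristic cone `K = cone (epi δ_C* ∪ ⋃ i, epi f_i*)` of the system. -/
def charCone {I : Type*} (C : Set X) (f : I → X → EReal) : Set (WeakDual ℝ X × ℝ) :=
  coneGen (epiFn (conjFn (indicatorE C)) ∪ ⋃ i, epiFn (conjFn (f i)))

/-- Barrier cone `barr C = dom δ_C*`. -/
def barCone (C : Set X) : Set (WeakDual ℝ X) :=
  domFn (conjFn (indicatorE C))

/-- The Farkas–Minkowski constraint qualification. -/
def IsFM {I : Type*} (C : Set X) (f : I → X → EReal) : Prop :=
  (solSet C f).Nonempty ∧ IsClosed (charCone C f)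

/-- Recession function `h^∞ = δ*_{dom h*}`. -/
def recFn (h : X → EReal) : X → EReal :=
  fun x => ⨆ q ∈ domFn (conjFn h), ((q x : ℝ) : EReal)

/-- Recession cone `D^∞ = ⋂_{t>0} t (D - a)`, for any `a ∈ D`. -/
def recCone (D : Set X) : Set X :=
  {d | ∀ a ∈ D, ∀ t : ℝ, 0 < t → d ∈ t • (D - ({a} : Set X))}

/-- Subdifferential of `h` at `a`. -/
def subdiff (h : X → EReal) (a : X) : Set (WeakDual ℝ X) :=
  {p | (∃ r : ℝ, h a = (r : EReal)) ∧ ∀ x, h a + ((p (x - a) : ℝ) : EReal) ≤ h x}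

/-!
Write `E = epi g* + K`. It is convex, closed upwards in the real coordinate, and its projection
to `X*` is `dom g* + cone Ω + barr C`. Since the dual of `X* × ℝ` (weak-* topology) is `X × ℝ`,
Hahn–Banach shows that the closure of such a set is the full cylinder over the closure of its
projection exactly when no `x ∈ X` makes the gap `⟨z, x⟩ - r` bounded above on `E`. Such an `x` is
precisely a point of `A ∩ dom g`: boundedness on the cone `K` forces the gap to be `≤ 0` on `K`,
which by the separation theorem (for `C`) and the conjugate description of the `f i` (for their
sublevel sets) says `x ∈ A`, while boundedness on `epi g*` says `g x < ∞`.
-/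

open Set

instance WeakDual.instLocallyConvexSpace : LocallyConvexSpace ℝ (WeakDual ℝ X) :=
  WeakBilin.locallyConvexSpace

lemma le_zero_of_forall_add_mul_le {a b β : ℝ} (h : ∀ t : ℝ, 0 ≤ t → a + t * b ≤ β) : b ≤ 0 := by
  by_contra! hb
  have := h ((|β - a| + 1) / b) (by positivity)
  rw [div_mul_cancel₀ _ hb.ne'] at this
  linarith [le_abs_self (β - a)]

lemma EReal.coe_sub_le_iff_forall_le {a s : ℝ} {e : EReal} :
    (a : EReal) - e ≤ s ↔ ∀ t : ℝ, e ≤ t → a - s ≤ t := by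
  induction e using EReal.rec with
  | bot => simpa using ⟨a - s - 1, by linarith⟩
  | top => simp
  | coe r =>
    rw [← EReal.coe_sub, EReal.coe_le_coe_iff]
    refine ⟨fun h t ht => ?_, fun h => ?_⟩
    · linarith [EReal.coe_le_coe_iff.1 ht]
    · linarith [h r le_rfl]

lemma EReal.lt_top_iff_exists_le_coe {e : EReal} : e < ⊤ ↔ ∃ r : ℝ, e ≤ r :=
  ⟨fun h => (EReal.lt_iff_exists_real_btwn.1 h).imp fun _ h => h.1.le,
    fun ⟨r, hr⟩ => hr.trans_lt (EReal.coe_lt_top r)⟩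

lemma ContinuousLinearMap.apply_eq_fst_add_snd_mul {V : Type*} [AddCommGroup V] [Module ℝ V]
    [TopologicalSpace V] (Φ : V × ℝ →L[ℝ] ℝ) (z : V × ℝ) :
    Φ z = Φ (z.1, 0) + z.2 * Φ (0, 1) := by
  rw [← smul_eq_mul, ← map_smul, ← map_add]
  simp

lemma PointedCone.map_hull {E F : Type*} [AddCommGroup E] [Module ℝ E] [AddCommGroup F]
    [Module ℝ F] (f : E →ₗ[ℝ] F) (s : Set E) :
    (PointedCone.hull ℝ s).map f = PointedCone.hull ℝ (f '' s) :=
  Submodule.map_span _ _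

lemma coneGen_eq_hull {V : Type*} [AddCommGroup V] [Module ℝ V] (D : Set V) :
    coneGen D = (PointedCone.hull ℝ D : Set V) := by
  apply Subset.antisymm
  · rintro _ (rfl | ⟨t, ht, x, hx, rfl⟩)
    · exact zero_mem _
    · exact PointedCone.smul_mem _ ht <|
        convexHull_min PointedCone.subset_hull (PointedCone.convex _) hx
  · intro y hy
    induction hy using Submodule.span_induction with
    | mem x hx => exact Or.inr ⟨1, zero_le_one, x, subset_convexHull ℝ D hx, (one_smul ℝ x).symm⟩
    | zero => exact Or.inl rfl
    | add x y _ _ hx hy =>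
      rcases hx with rfl | ⟨t, ht, u, hu, rfl⟩
      · simpa using hy
      rcases hy with rfl | ⟨s, hs, v, hv, rfl⟩
      · rw [add_zero]
        exact Or.inr ⟨t, ht, u, hu, rfl⟩
      rcases (add_nonneg ht hs).eq_or_lt with hts | hts
      · obtain ⟨rfl, rfl⟩ : t = 0 ∧ s = 0 := ⟨by linarith, by linarith⟩
        rw [zero_smul, zero_smul, add_zero]
        exact Or.inl rfl
      refine Or.inr ⟨t + s, hts.le, (t / (t + s)) • u + (s / (t + s)) • v,
        convex_iff_div.1 (convex_convexHull ℝ D) hu hv ht hs hts, ?_⟩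
      rw [smul_add, smul_smul, smul_smul, mul_div_cancel₀ _ hts.ne', mul_div_cancel₀ _ hts.ne']
    | smul c x _ hx =>
      rcases hx with rfl | ⟨t, ht, u, hu, rfl⟩
      · exact Or.inl (smul_zero c)
      · exact Or.inr ⟨c * t, mul_nonneg c.2 ht, u, hu, by rw [← Nonneg.coe_smul, smul_smul]⟩

lemma isClosed_epiFn {V : Type*} [TopologicalSpace V] {h : V → EReal}
    (hh : LowerSemicontinuous h) : IsClosed (epiFn h) :=
  hh.isClosed_epigraph.preimage <|
    continuous_fst.prodMk <| continuous_coe_real_ereal.comp continuous_snd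

lemma image_fst_epiFn {V : Type*} (φ : V → EReal) : Prod.fst '' epiFn φ = domFn φ := by
  ext q
  simp only [mem_image, Prod.exists, exists_and_right, exists_eq_right, epiFn, domFn, mem_ofPred_eq]
  exact EReal.lt_top_iff_exists_le_coe.symm

lemma mk_mem_epiFn_add_of_le {V : Type*} [AddCommGroup V] {φ : V → EReal} {K : Set (V × ℝ)}
    {w : V × ℝ} (hw : w ∈ epiFn φ + K) {t : ℝ} (ht : w.2 ≤ t) : (w.1, t) ∈ epiFn φ + K := by
  obtain ⟨e, he, k, hk, rfl⟩ := hw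
  refine ⟨(e.1, t - k.2), he.trans (EReal.coe_le_coe_iff.2 ?_), k, hk, ?_⟩
  · simp only [Prod.snd_add] at ht
    linarith
  · ext <;> simp

lemma mem_epiFn_conjFn_iff {h : X → EReal} {z : WeakDual ℝ X × ℝ} :
    z ∈ epiFn (conjFn h) ↔ ∀ w ∈ epiFn h, z.1 w.1 - z.2 ≤ w.2 := by
  simp only [epiFn, conjFn, mem_ofPred_eq, iSup_le_iff, EReal.coe_sub_le_iff_forall_le, Prod.forall]

lemma convex_epiFn_conjFn (h : X → EReal) : Convex ℝ (epiFn (conjFn h)) := by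
  intro z hz z' hz' a b ha hb hab
  refine mem_epiFn_conjFn_iff.2 fun w hw => ?_
  have h1 := mul_le_mul_of_nonneg_left (mem_epiFn_conjFn_iff.1 hz w hw) ha
  have h2 := mul_le_mul_of_nonneg_left (mem_epiFn_conjFn_iff.1 hz' w hw) hb
  have h3 : a * w.2 + b * w.2 = w.2 := by rw [← add_mul, hab, one_mul]
  change a * z.1 w.1 + b * z'.1 w.1 - (a * z.2 + b * z'.2) ≤ w.2
  linarith

lemma InGamma.exists_eq_coe {h : X → EReal} (hh : InGamma h) : ∃ (x : X) (r : ℝ), h x = r := by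
  obtain ⟨x, hx⟩ := hh.2.1
  exact ⟨x, (h x).toReal, (EReal.coe_toReal hx (hh.1 x)).symm⟩

lemma exists_mem_epiFn_conjFn_of_forall_lt {h : X → EReal} {Φ : X × ℝ →L[ℝ] ℝ} {u : ℝ}
    (hΦ : ∀ w ∈ epiFn h, Φ w < u) (hα : Φ (0, 1) < 0) :
    ∃ z ∈ epiFn (conjFn h), ∀ w : X × ℝ, u < Φ w → w.2 < z.1 w.1 - z.2 := by
  set a := -Φ (0, 1)
  have ha : 0 < a := neg_pos.2 hα
  let q : WeakDual ℝ X := StrongDual.toWeakDual (a⁻¹ • Φ.comp (.inl ℝ X ℝ))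
  have key : ∀ w : X × ℝ, q w.1 - u / a - w.2 = (Φ w - u) / a := fun w => by
    rw [Φ.apply_eq_fst_add_snd_mul w]
    simp only [q, StrongDual.toWeakDual_apply, smul_apply,
      ContinuousLinearMap.comp_apply, ContinuousLinearMap.inl_apply, smul_eq_mul]
    field_simp
    ring
  refine ⟨(q, u / a), mem_epiFn_conjFn_iff.2 fun w hw => ?_, fun w hw => ?_⟩
  · have := div_neg_of_neg_of_pos (sub_neg.2 (hΦ w hw)) ha
    linarith [key w]
  · have := div_pos (sub_pos.2 hw) ha
    linarith [key w]

lemma InGamma.epiFn_conjFn_nonempty [IsTopologicalAddGroup X] [ContinuousSMul ℝ X]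
    [LocallyConvexSpace ℝ X] {h : X → EReal} (hh : InGamma h) :
    (epiFn (conjFn h)).Nonempty := by
  obtain ⟨x, r, hxr⟩ := hh.exists_eq_coe
  have hnot : (x, r - 1) ∉ epiFn h := by
    simp only [epiFn, mem_ofPred_eq, hxr, EReal.coe_le_coe_iff]
    linarith
  obtain ⟨Φ, u, hΦ, hu⟩ :=
    geometric_hahn_banach_closed_point hh.2.2.1 (isClosed_epiFn hh.2.2.2) hnot
  have hin := hΦ (x, r) hxr.le
  rw [Φ.apply_eq_fst_add_snd_mul] at hu hin
  obtain ⟨z, hz, -⟩ := exists_mem_epiFn_conjFn_of_forall_lt hΦ (by dsimp at hu hin; linarith)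
  exact ⟨z, hz⟩

lemma InGamma.le_of_forall_mem_epiFn_conjFn [IsTopologicalAddGroup X] [ContinuousSMul ℝ X]
    [LocallyConvexSpace ℝ X] {h : X → EReal} (hh : InGamma h) {x : X} {c : ℝ}
    (H : ∀ z ∈ epiFn (conjFn h), z.1 x - z.2 ≤ c) : h x ≤ c := by
  by_contra hxc
  obtain ⟨Φ, u, hΦ, hu⟩ := geometric_hahn_banach_closed_point hh.2.2.1 (isClosed_epiFn hh.2.2.2)
    (show (x, c) ∉ epiFn h from hxc)
  have hΦw : ∀ w ∈ epiFn h, Φ (w.1, 0) + w.2 * Φ (0, 1) < u := fun w hw =>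
    Φ.apply_eq_fst_add_snd_mul w ▸ hΦ w hw
  obtain ⟨x₀, r₀, hx₀⟩ := hh.exists_eq_coe
  have hα : Φ (0, 1) ≤ 0 := le_zero_of_forall_add_mul_le (a := Φ (x₀, 0) + r₀ * Φ (0, 1)) (β := u)
    fun t ht => by
      have := hΦw (x₀, r₀ + t) (hx₀.trans_le (EReal.coe_le_coe_iff.2 (by linarith)))
      dsimp only at this
      linarith
  rcases hα.lt_or_eq with hα | hα
  · obtain ⟨z, hz, hlt⟩ := exists_mem_epiFn_conjFn_of_forall_lt hΦ hα
    linarith [hlt (x, c) hu, H z hz]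
  -- vertical hyperplane: move a point of `epi h*` along the direction `(Φ(·, 0), u)`
  obtain ⟨z₀, hz₀⟩ := hh.epiFn_conjFn_nonempty
  let q : WeakDual ℝ X := StrongDual.toWeakDual (Φ.comp (.inl ℝ X ℝ))
  have hq : ∀ y, q y = Φ (y, 0) := fun _ => rfl
  have hmem : ∀ t : ℝ, 0 ≤ t → z₀ + t • (q, u) ∈ epiFn (conjFn h) := fun t ht =>
    mem_epiFn_conjFn_iff.2 fun w hw => by
      have h1 := mem_epiFn_conjFn_iff.1 hz₀ w hw
      have h2 := hΦw w hw
      rw [hα, mul_zero, add_zero, ← hq] at h2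
      change z₀.1 w.1 + t * q w.1 - (z₀.2 + t * u) ≤ w.2
      linarith [mul_le_mul_of_nonneg_left h2.le ht]
  have := le_zero_of_forall_add_mul_le (a := z₀.1 x - z₀.2) (b := q x - u) (β := c)
    fun t ht => by
      have := H _ (hmem t ht)
      change z₀.1 x + t * q x - (z₀.2 + t * u) ≤ c at this
      linarith [mul_sub t (q x) u]
  rw [Φ.apply_eq_fst_add_snd_mul, hα, mul_zero, add_zero, ← hq] at hu
  linarith

def epiSupportCone (C : Set X) : PointedCone ℝ (WeakDual ℝ X × ℝ) where
  carrier := {z | ∀ x ∈ C, z.1 x ≤ z.2}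
  zero_mem' _ _ := le_rfl
  add_mem' hz hw x hx := add_le_add (hz x hx) (hw x hx)
  smul_mem' c _ hz x hx := mul_le_mul_of_nonneg_left (hz x hx) c.2

@[simp] lemma mem_epiSupportCone {C : Set X} {z : WeakDual ℝ X × ℝ} :
    z ∈ epiSupportCone C ↔ ∀ x ∈ C, z.1 x ≤ z.2 := Iff.rfl

lemma epiSupportCone_anti {C D : Set X} (h : C ⊆ D) : epiSupportCone D ≤ epiSupportCone C :=
  fun _ hz x hx => hz x (h hx)

lemma epiFn_conjFn_indicatorE (C : Set X) :
    epiFn (conjFn (indicatorE C)) = epiSupportCone C := by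
  ext z
  rw [SetLike.mem_coe, mem_epiFn_conjFn_iff, mem_epiSupportCone]
  simp only [epiFn, indicatorE, mem_ofPred_eq, Prod.forall]
  refine ⟨fun h x hx => by simpa using h x 0 (by simp [hx]), fun h x t hxt => ?_⟩
  split_ifs at hxt with hx
  · linarith [h x hx, EReal.coe_nonneg.1 hxt]
  · simp at hxt

lemma barCone_eq (C : Set X) :
    barCone C = Prod.fst '' (epiSupportCone C : Set (WeakDual ℝ X × ℝ)) := by
  rw [barCone, ← image_fst_epiFn, epiFn_conjFn_indicatorE]

lemma mem_of_forall_mem_epiSupportCone [IsTopologicalAddGroup X] [ContinuousSMul ℝ X]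
    [LocallyConvexSpace ℝ X] {C : Set X} (hCcl : IsClosed C) (hCcv : Convex ℝ C) {x : X}
    (H : ∀ z ∈ epiSupportCone C, z.1 x ≤ z.2) : x ∈ C := by
  by_contra hx
  obtain ⟨φ, u, hφ, hu⟩ := geometric_hahn_banach_closed_point hCcv hCcl hx
  exact (H (StrongDual.toWeakDual φ, u) fun a ha => (hφ a ha).le).not_gt hu

lemma charCone_eq {I : Type*} (C : Set X) (f : I → X → EReal) :
    charCone C f = ↑(epiSupportCone C ⊔ PointedCone.hull ℝ (⋃ i, epiFn (conjFn (f i)))) := by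
  rw [charCone, coneGen_eq_hull, epiFn_conjFn_indicatorE]
  unfold PointedCone.hull
  rw [Submodule.span_union, Submodule.span_eq]

lemma image_fst_epiFn_add_charCone {I : Type*} (C : Set X) (f : I → X → EReal) (g : X → EReal) :
    Prod.fst '' (epiFn (conjFn g) + charCone C f) =
      domFn (conjFn g) + coneGen (⋃ i, domFn (conjFn (f i))) + barCone C := by
  have hfst : Prod.fst = ⇑(LinearMap.fst ℝ (WeakDual ℝ X) ℝ) := rfl
  rw [charCone_eq, Submodule.coe_sup, hfst, Set.image_add, Set.image_add,
    ← PointedCone.coe_map (PointedCone.hull ℝ _), PointedCone.map_hull, ← hfst, image_fst_epiFn,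
    barCone_eq, image_iUnion, coneGen_eq_hull]
  simp only [image_fst_epiFn]
  rw [add_assoc, add_comm (Prod.fst '' _)]

section CharCone

variable {I : Type*} {C : Set X} {f : I → X → EReal}

lemma zero_mem_charCone : (0 : WeakDual ℝ X × ℝ) ∈ charCone C f := by
  rw [charCone_eq]
  exact zero_mem _

lemma smul_mem_charCone {t : ℝ} (ht : 0 ≤ t) {z : WeakDual ℝ X × ℝ} (hz : z ∈ charCone C f) :
    t • z ∈ charCone C f := by
  rw [charCone_eq] at *
  exact PointedCone.smul_mem _ ht hz

lemma convex_charCone : Convex ℝ (charCone C f) := by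
  rw [charCone_eq]
  exact PointedCone.convex _

lemma epiSupportCone_subset_charCone : (epiSupportCone C : Set _) ⊆ charCone C f := by
  rw [charCone_eq]
  exact fun _ hz => le_sup_left (a := epiSupportCone C) hz

lemma epiFn_conjFn_subset_charCone (i : I) : epiFn (conjFn (f i)) ⊆ charCone C f := by
  rw [charCone_eq]
  exact fun _ hz => (le_sup_right : _ ≤ epiSupportCone C ⊔ _)
    (PointedCone.subset_hull (mem_iUnion.2 ⟨i, hz⟩))

lemma charCone_subset_epiSupportCone_solSet : charCone C f ⊆ epiSupportCone (solSet C f) := by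
  rw [charCone_eq]
  refine sup_le (epiSupportCone_anti fun _ ha => ha.1) (Submodule.span_le.2 ?_)
  simp only [iUnion_subset_iff]
  intro i z hz a ha
  have := mem_epiFn_conjFn_iff.1 hz (a, 0) (by simpa [epiFn] using ha.2 i)
  dsimp only at this
  linarith

end CharCone

section SolSet

variable [IsTopologicalAddGroup X] [ContinuousSMul ℝ X] [LocallyConvexSpace ℝ X]
  {I : Type*} {C : Set X} {f : I → X → EReal}

lemma mem_solSet_iff (hCcl : IsClosed C) (hCcv : Convex ℝ C) (hf : ∀ i, InGamma (f i)) {x : X} :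
    x ∈ solSet C f ↔ ∀ z ∈ charCone C f, z.1 x ≤ z.2 := by
  refine ⟨fun hx z hz => charCone_subset_epiSupportCone_solSet hz x hx, fun H => ⟨?_, fun i => ?_⟩⟩
  · exact mem_of_forall_mem_epiSupportCone hCcl hCcv fun z hz =>
      H z (epiSupportCone_subset_charCone hz)
  · exact_mod_cast (hf i).le_of_forall_mem_epiFn_conjFn fun z hz =>
      sub_nonpos.2 (H z (epiFn_conjFn_subset_charCone i hz))

lemma mem_solSet_inter_domFn_iff (hCcl : IsClosed C) (hCcv : Convex ℝ C)
    (hf : ∀ i, InGamma (f i)) {g : X → EReal} (hg : InGamma g) {x : X} :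
    x ∈ solSet C f ∩ domFn g ↔
      BddAbove ((fun w => w.1 x - w.2) '' (epiFn (conjFn g) + charCone C f)) := by
  simp only [bddAbove_def, forall_mem_image]
  constructor
  · rintro ⟨hA, hdom⟩
    obtain ⟨β, hβ⟩ := EReal.lt_top_iff_exists_le_coe.1 hdom
    refine ⟨β, ?_⟩
    rintro _ ⟨e, he, k, hk, rfl⟩
    have h1 := mem_epiFn_conjFn_iff.1 he (x, β) hβ
    have h2 := (mem_solSet_iff hCcl hCcv hf).1 hA k hk
    change e.1 x + k.1 x - (e.2 + k.2) ≤ β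
    dsimp only at h1
    linarith
  · rintro ⟨β, hβ⟩
    obtain ⟨e, he⟩ := hg.epiFn_conjFn_nonempty
    refine ⟨(mem_solSet_iff hCcl hCcv hf).2 fun k hk => ?_, ?_⟩
    · -- the gap is bounded above along the ray `e + t • k`, hence nonpositive on `k`
      have := le_zero_of_forall_add_mul_le (a := e.1 x - e.2) (b := k.1 x - k.2) (β := β)
        fun t ht => by
          have := hβ (add_mem_add he (smul_mem_charCone ht hk))
          change e.1 x + t * k.1 x - (e.2 + t * k.2) ≤ β at this
          linarith [mul_sub t (k.1 x) k.2]
      linarith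
    · refine (hg.le_of_forall_mem_epiFn_conjFn fun z hz => ?_).trans_lt (EReal.coe_lt_top β)
      simpa using hβ (add_mem_add hz zero_mem_charCone)

end SolSet

lemma exists_bddAbove_of_notMem_closure {E : Set (WeakDual ℝ X × ℝ)} (hE : Convex ℝ E)
    {p : WeakDual ℝ X} {r t : ℝ} (hr : (p, r) ∉ closure E) (ht : (p, t) ∈ E) (hrt : r ≤ t) :
    ∃ x : X, BddAbove ((fun w => w.1 x - w.2) '' E) := by
  obtain ⟨Φ, u, hpu, hΦ⟩ := geometric_hahn_banach_point_closed hE.closure isClosed_closure hr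
  have hpt := hΦ _ (subset_closure ht)
  rw [Φ.apply_eq_fst_add_snd_mul] at hpu hpt
  have hα : 0 < Φ (0, 1) := by
    by_contra! hα
    dsimp only at hpu hpt
    linarith [mul_le_mul_of_nonpos_right hrt hα]
  -- a continuous functional on the weak dual is the evaluation at a point of `X`
  obtain ⟨y, hy⟩ := LinearMap.dualEmbedding_surjective (topDualPairing ℝ X)
    (Φ.comp (.inl ℝ (WeakDual ℝ X) ℝ))
  have hq : ∀ q : WeakDual ℝ X, Φ (q, 0) = q y := fun q => (DFunLike.congr_fun hy q).symm
  refine ⟨-(Φ (0, 1))⁻¹ • y, bddAbove_def.2 ⟨-u / Φ (0, 1), forall_mem_image.2 fun w hw => ?_⟩⟩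
  have hw := hΦ w (subset_closure hw)
  rw [Φ.apply_eq_fst_add_snd_mul, hq] at hw
  have key : w.1 (-(Φ (0, 1))⁻¹ • y) - w.2 = -(w.1 y + w.2 * Φ (0, 1)) / Φ (0, 1) := by
    rw [map_smul, smul_eq_mul]
    field_simp
    ring
  rw [key]
  exact div_le_div_of_nonneg_right (by linarith) hα.le

theorem closure_eq_closure_image_fst_prod_univ_iff {E : Set (WeakDual ℝ X × ℝ)}
    (hE : Convex ℝ E) (hne : E.Nonempty) (hup : ∀ w ∈ E, ∀ t : ℝ, w.2 ≤ t → (w.1, t) ∈ E) :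
    closure E = closure (Prod.fst '' E) ×ˢ (univ : Set ℝ) ↔
      ∀ x : X, ¬ BddAbove ((fun w => w.1 x - w.2) '' E) := by
  have hsub : E ⊆ (Prod.fst '' E) ×ˢ univ := fun w hw => ⟨mem_image_of_mem _ hw, trivial⟩
  rw [← closure_univ, ← closure_prod_eq]
  constructor
  · rintro hcl x ⟨β, hβ⟩
    obtain ⟨e, he⟩ := hne
    have hhalf : closure E ⊆ {w | w.1 x - w.2 ≤ β} :=
      closure_minimal (fun w hw => hβ (mem_image_of_mem _ hw))
        (isClosed_le (((WeakDual.eval_continuous x).comp continuous_fst).sub continuous_snd)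
          continuous_const)
    have hmem : (e.1, e.1 x - β - 1) ∈ closure E :=
      hcl ▸ subset_closure ⟨⟨e, he, rfl⟩, trivial⟩
    have := hhalf hmem
    simp only [mem_ofPred_eq] at this
    linarith
  · intro H
    refine (closure_mono hsub).antisymm (closure_minimal ?_ isClosed_closure)
    rintro ⟨p, r⟩ ⟨⟨w, hw, rfl⟩, -⟩
    by_contra hr
    obtain ⟨x, hx⟩ := exists_bddAbove_of_notMem_closure hE hr
      (hup w hw (max r w.2) (le_max_right _ _)) (le_max_left _ _)
    exact H x hx

theorem stmt10_general [IsTopologicalAddGroup X] [ContinuousSMul ℝ X] [LocallyConvexSpace ℝ X] {I : Type*} (C : Set X) (hCcl : IsClosed C) (hCcv : Convex ℝ C)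
    (f : I → X → EReal) (hf : ∀ i, InGamma (f i))
    (g : X → EReal) (hg : InGamma g) :
    solSet C f ∩ domFn g = ∅ ↔
      closure (epiFn (conjFn g) + charCone C f) =
        (closure (domFn (conjFn g) + coneGen (⋃ i, domFn (conjFn (f i))) + barCone C)) ×ˢ
          (Set.univ : Set ℝ) := by
  rw [← image_fst_epiFn_add_charCone,
    closure_eq_closure_image_fst_prod_univ_iff ((convex_epiFn_conjFn g).add convex_charCone)
      (hg.epiFn_conjFn_nonempty.add ⟨0, zero_mem_charCone⟩)
      fun w hw t ht => mk_mem_epiFn_add_of_le hw ht,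
    eq_empty_iff_forall_notMem]
  exact forall_congr' fun x => (mem_solSet_inter_domFn_iff hCcl hCcv hf hg).not

/-- Theorem 3 (Characterization of the hidden assumption). -/
theorem stmt10 [IsTopologicalAddGroup X] [ContinuousSMul ℝ X] [LocallyConvexSpace ℝ X] [T2Space X] {I : Type*} (C : Set X) (hCne : C.Nonempty) (hCcl : IsClosed C) (hCcv : Convex ℝ C)
    (f : I → X → EReal) (hf : ∀ i, InGamma (f i))
    (g : X → EReal) (hg : InGamma g) :
    solSet C f ∩ domFn g = ∅ ↔
      closure (epiFn (conjFn g) + charCone C f) =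
        (closure (domFn (conjFn g) + coneGen (⋃ i, domFn (conjFn (f i))) + barCone C)) ×ˢ
          (Set.univ : Set ℝ) :=
  stmt10_general C hCcl hCcv f hf g hg
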